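/- arXiv:2307.10446 — 6 statements merged into one kernel-verified Lean document; each statement's English description precedes it below -/
import Mathlib

section
/- Let H be a complex (or real) Hilbert space and let a ∈ (0,1). Then the kernel k(x,y) = ‖x‖^{2a} + ‖y‖^{2a} − ‖x−y‖^{2a} is positive definite on H. -/
open Complex Finset

/-- A (real-valued, viewed as complex-valued) kernel `k : X → X → ℝ` is positive definite if
every finite quadratic form `∑_{j,i} conj (c i) * k (x i) (x j) * c j` (with complex
coefficients) is a nonnegative real number. -/
def IsPositiveDefiniteKernelR {X : Type*} (k : X → X → ℝ) : Prop :=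
  ∀ (N : ℕ) (x : Fin N → X) (c : Fin N → ℂ),
    (∑ j, ∑ i, (starRingEnd ℂ) (c i) * (k (x i) (x j) : ℂ) * c j).im = 0 ∧
    0 ≤ (∑ j, ∑ i, (starRingEnd ℂ) (c i) * (k (x i) (x j) : ℂ) * c j).re

/-!
Schoenberg's argument. For `t > 0` the Gaussian kernel `exp (-t ‖x - y‖²)` is positive
semidefinite: up to a diagonal scaling it is the entrywise exponential of the Gram matrix
`2t ⟪x, y⟫`, a limit of nonnegative combinations of Hadamard powers of a Gram matrix (Schur).
Integrating `1 - exp (-t ‖x - y‖²)` against `t ^ (-1 - a) dt` gives `‖x - y‖ ^ (2a)` up to a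
positive constant, so this kernel is conditionally negative definite: its quadratic form is
`≤ 0` on weights summing to zero. Adjoining the point `0` with weight `-∑ cᵢ` turns that
into positivity of `‖x‖ ^ (2a) + ‖y‖ ^ (2a) - ‖x - y‖ ^ (2a)`. Finally, a real positive
semidefinite matrix stays positive semidefinite over `ℂ`.
-/

open scoped ComplexOrder

open MeasureTheory Set

namespace Matrix

variable {n : Type*}

theorem PosSemidef.map_ofReal [Finite n] {𝕜 : Type*} [RCLike 𝕜] {A : Matrix n n ℝ}
    (hA : A.PosSemidef) : (A.map ((↑) : ℝ → 𝕜)).PosSemidef := by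
  obtain ⟨m, v, rfl⟩ := posSemidef_iff_eq_sum_vecMulVec.mp hA
  have hmap : (∑ i, vecMulVec (v i) (star (v i))).map ((↑) : ℝ → 𝕜)
      = ∑ i, vecMulVec ((↑) ∘ v i) (star ((↑) ∘ v i)) := by
    ext j k
    simp [vecMulVec_apply, Matrix.sum_apply]
  rw [hmap]
  exact posSemidef_sum _ fun i _ => posSemidef_vecMulVec_self_star _

theorem PosSemidef.map_pow [Finite n] {𝕜 : Type*} [RCLike 𝕜] {A : Matrix n n 𝕜}
    (hA : A.PosSemidef) (k : ℕ) :
    (A.map (· ^ k)).PosSemidef := by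
  induction k with
  | zero =>
    have hones : A.map (· ^ 0) = vecMulVec (fun _ => 1) (star fun _ => 1) := by
      ext i j
      simp [vecMulVec_apply]
    rw [hones]
    exact posSemidef_vecMulVec_self_star _
  | succ k ih =>
    have hsucc : A.map (· ^ (k + 1)) = A.map (· ^ k) ⊙ A := by
      ext i j
      simp [pow_succ]
    rw [hsucc]
    exact ih.hadamard hA

theorem PosSemidef.map_exp [Fintype n] {A : Matrix n n ℝ} (hA : A.PosSemidef) :
    (A.map Real.exp).PosSemidef := by
  refine posSemidef_iff_dotProduct_mulVec.mpr ⟨hA.isHermitian.map _ fun _ => rfl, fun v => ?_⟩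
  have hexp : HasSum (fun k => (k.factorial : ℝ)⁻¹ • A.map (· ^ k)) (A.map Real.exp) :=
    Pi.hasSum.mpr fun i => Pi.hasSum.mpr fun j => by
      simpa [Real.exp_eq_exp_ℝ, div_eq_inv_mul] using
        NormedSpace.expSeries_div_hasSum_exp (A i j)
  let q : Matrix n n ℝ →L[ℝ] ℝ := LinearMap.toContinuousLinearMap
    { toFun := fun M => star v ⬝ᵥ M *ᵥ v
      map_add' := fun M N => by simp [add_mulVec, dotProduct_add]
      map_smul' := fun r M => by simp [smul_mulVec, dotProduct_smul] }
  refine (hexp.mapL q).nonneg fun k => ?_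
  simpa [q, smul_mulVec, dotProduct_smul] using
    mul_nonneg (by positivity) ((hA.map_pow k).dotProduct_mulVec_nonneg v)

theorem posSemidef_exp_neg_norm_sub_sq_mul [Fintype n] {F : Type*} [NormedAddCommGroup F]
    [InnerProductSpace ℝ F] (x : n → F) {t : ℝ} (ht : 0 ≤ t) :
    (of fun i j => Real.exp (-(‖x i - x j‖ ^ 2 * t))).PosSemidef := by
  classical
  let d : Matrix n n ℝ := diagonal fun i => Real.exp (-(t * ‖x i‖ ^ 2))
  have hgram : (((2 * t) • gram ℝ x).map Real.exp).PosSemidef :=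
    ((posSemidef_gram ℝ x).smul (by positivity)).map_exp
  convert hgram.conjTranspose_mul_mul_same d using 1
  ext i j
  simp only [d, of_apply, diagonal_conjTranspose, star_trivial, diagonal_mul, mul_diagonal,
    map_apply, smul_apply, gram_apply, smul_eq_mul, ← Real.exp_add, norm_sub_sq_real]
  congr 1
  ring

end Matrix

open Matrix in
theorem IsPositiveDefiniteKernelR.of_posSemidef {X : Type*} {k : X → X → ℝ}
    (hk : ∀ (N : ℕ) (x : Fin N → X), (of fun i j => k (x i) (x j)).PosSemidef) :
    IsPositiveDefiniteKernelR k := by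
  intro N x c
  have hc := ((hk N x).map_ofReal (𝕜 := ℂ)).dotProduct_mulVec_nonneg c
  have hsum : star c ⬝ᵥ (of fun i j => k (x i) (x j)).map (RCLike.ofReal : ℝ → ℂ) *ᵥ c
      = ∑ j, ∑ i, (starRingEnd ℂ) (c i) * (k (x i) (x j) : ℂ) * c j := by
    simp only [dotProduct, mulVec, Finset.mul_sum, map_apply, of_apply, Pi.star_apply,
      RCLike.star_def]
    rw [Finset.sum_comm]
    simp only [mul_assoc]
    rfl
  rw [hsum, Complex.nonneg_iff] at hc
  exact ⟨hc.2.symm, hc.1⟩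

theorem one_sub_exp_neg_mem_Icc {t : ℝ} (ht : 0 ≤ t) :
    1 - Real.exp (-t) ∈ Icc 0 (min t 1) := by
  refine ⟨by simp [Real.exp_le_one_iff, ht], le_min ?_ ?_⟩
  · linarith [Real.add_one_le_exp (-t)]
  · linarith [Real.exp_pos (-t)]

theorem integrableOn_one_sub_exp_neg_mul_rpow {a : ℝ} (ha0 : 0 < a) (ha1 : a < 1) :
    IntegrableOn (fun t => (1 - Real.exp (-t)) * t ^ (-1 - a)) (Ioi 0) := by
  have hcont : ContinuousOn (fun t : ℝ => (1 - Real.exp (-t)) * t ^ (-1 - a)) (Ioi 0) :=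
    (by fun_prop : Continuous fun t : ℝ => 1 - Real.exp (-t)).continuousOn.mul
      fun t ht => (Real.continuousAt_rpow_const t _ (Or.inl (ne_of_gt ht))).continuousWithinAt
  have hbound : ∀ t ∈ Ioi (0 : ℝ), ‖(1 - Real.exp (-t)) * t ^ (-1 - a)‖
      ≤ min t 1 * t ^ (-1 - a) := fun t (ht : 0 < t) => by
    obtain ⟨h0, h1⟩ := one_sub_exp_neg_mem_Icc ht.le
    rw [Real.norm_of_nonneg (mul_nonneg h0 (Real.rpow_nonneg ht.le _))]
    exact mul_le_mul_of_nonneg_right h1 (Real.rpow_nonneg ht.le _)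
  have hsmall : IntegrableOn (fun t : ℝ => t ^ (-a)) (Ioc 0 1) := by
    rw [integrableOn_Ioc_iff_integrableOn_Ioo]
    exact (intervalIntegral.integrableOn_Ioo_rpow_iff one_pos).mpr (by linarith)
  have hlarge : IntegrableOn (fun t : ℝ => t ^ (-1 - a)) (Ioi 1) :=
    integrableOn_Ioi_rpow_of_lt (by linarith) one_pos
  rw [← Ioc_union_Ioi_eq_Ioi zero_le_one]
  refine IntegrableOn.union ?_ ?_
  · refine hsmall.mono' ((hcont.mono Ioc_subset_Ioi_self).aestronglyMeasurable measurableSet_Ioc)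
      ((ae_restrict_iff' measurableSet_Ioc).mpr (ae_of_all _ fun t ht => ?_))
    have := hbound t ht.1
    rwa [min_eq_left ht.2, ← Real.rpow_one_add' ht.1.le (by linarith),
      show (1 : ℝ) + (-1 - a) = -a by ring] at this
  · refine hlarge.mono' ((hcont.mono (Ioi_subset_Ioi zero_le_one)).aestronglyMeasurable
      measurableSet_Ioi) ((ae_restrict_iff' measurableSet_Ioi).mpr (ae_of_all _ fun t ht => ?_))
    have := hbound t (mem_Ioi.mpr (zero_lt_one.trans ht))
    rwa [min_eq_right (le_of_lt ht), one_mul] at this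

theorem integral_one_sub_exp_neg_mul_rpow_pos {a : ℝ} (ha0 : 0 < a) (ha1 : a < 1) :
    0 < ∫ t in Ioi 0, (1 - Real.exp (-t)) * t ^ (-1 - a) := by
  have hpos : ∀ t ∈ Ioi (0 : ℝ), 0 < (1 - Real.exp (-t)) * t ^ (-1 - a) := fun t (ht : 0 < t) =>
    mul_pos (by simpa using ht) (Real.rpow_pos_of_pos ht _)
  rw [setIntegral_pos_iff_support_of_nonneg_ae
    ((ae_restrict_iff' measurableSet_Ioi).mpr (ae_of_all _ fun t ht => (hpos t ht).le))
    (integrableOn_one_sub_exp_neg_mul_rpow ha0 ha1)]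
  have hsupp : Ioi (0 : ℝ) ⊆
      Function.support (fun t => (1 - Real.exp (-t)) * t ^ (-1 - a)) ∩ Ioi 0 :=
    fun t ht => ⟨(hpos t ht).ne', ht⟩
  exact (by simp : (0 : ENNReal) < volume (Ioi (0 : ℝ))).trans_le (measure_mono hsupp)

theorem one_sub_exp_neg_mul_mul_rpow_eqOn (a : ℝ) {s : ℝ} (hs : 0 < s) :
    EqOn (fun t => (1 - Real.exp (-(s * t))) * t ^ (-1 - a))
      (fun t => s ^ (1 + a) * ((1 - Real.exp (-(s * t))) * (s * t) ^ (-1 - a))) (Ioi 0) :=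
  fun t (ht : 0 < t) => by
    dsimp only
    rw [Real.mul_rpow hs.le ht.le, mul_left_comm, ← mul_assoc (s ^ (1 + a)), ← Real.rpow_add hs]
    simp

theorem integrableOn_one_sub_exp_neg_mul_mul_rpow {a : ℝ} (ha0 : 0 < a) (ha1 : a < 1) {s : ℝ}
    (hs : 0 ≤ s) : IntegrableOn (fun t => (1 - Real.exp (-(s * t))) * t ^ (-1 - a)) (Ioi 0) := by
  rcases hs.eq_or_lt with rfl | hs
  · simp
  refine IntegrableOn.congr_fun ?_ (one_sub_exp_neg_mul_mul_rpow_eqOn a hs).symm measurableSet_Ioi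
  refine Integrable.const_mul ?_ _
  exact (integrableOn_Ioi_comp_mul_left_iff (fun t => (1 - Real.exp (-t)) * t ^ (-1 - a)) 0 hs).mpr
    (by simpa using integrableOn_one_sub_exp_neg_mul_rpow ha0 ha1)

theorem integral_one_sub_exp_neg_mul_mul_rpow {a : ℝ} (ha : a ≠ 0) {s : ℝ} (hs : 0 ≤ s) :
    ∫ t in Ioi 0, (1 - Real.exp (-(s * t))) * t ^ (-1 - a)
      = s ^ a * ∫ t in Ioi 0, (1 - Real.exp (-t)) * t ^ (-1 - a) := by
  rcases hs.eq_or_lt with rfl | hs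
  · simp [Real.zero_rpow ha]
  rw [setIntegral_congr_fun measurableSet_Ioi (one_sub_exp_neg_mul_mul_rpow_eqOn a hs),
    integral_const_mul,
    integral_comp_mul_left_Ioi (fun t => (1 - Real.exp (-t)) * t ^ (-1 - a)) 0 hs, mul_zero,
    smul_eq_mul, ← mul_assoc, ← Real.rpow_neg_one, ← Real.rpow_add hs]
  ring_nf

namespace Matrix

variable {n : Type*} [Fintype n]

def CondNegDef (S : Matrix n n ℝ) : Prop :=
  ∀ v : n → ℝ, ∑ i, v i = 0 → v ⬝ᵥ S *ᵥ v ≤ 0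

theorem integral_dotProduct_mulVec {X : Type*} [MeasurableSpace X] {μ : Measure X}
    {F : n → n → X → ℝ} (hF : ∀ i j, Integrable (F i j) μ) (v : n → ℝ) :
    ∫ x, v ⬝ᵥ (of fun i j => F i j x) *ᵥ v ∂μ = v ⬝ᵥ (of fun i j => ∫ x, F i j x ∂μ) *ᵥ v := by
  simp only [dotProduct, mulVec, of_apply]
  rw [integral_finsetSum _ fun i _ => ((integrable_finsetSum _ fun j _ =>
    (hF i j).mul_const _)).const_mul _]
  refine Finset.sum_congr rfl fun i _ => ?_
  rw [integral_const_mul, integral_finsetSum _ fun j _ => (hF i j).mul_const _]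
  simp only [integral_mul_const]

theorem condNegDef_map_rpow {S : Matrix n n ℝ} (hS : ∀ i j, 0 ≤ S i j)
    (hexp : ∀ t > 0, (of fun i j => Real.exp (-(S i j * t))).PosSemidef)
    {a : ℝ} (ha0 : 0 < a) (ha1 : a < 1) : (S.map (· ^ a)).CondNegDef := by
  intro v hv
  set C := ∫ t in Ioi 0, (1 - Real.exp (-t)) * t ^ (-1 - a)
  have hrepr : C • (S.map (· ^ a)) = of fun i j =>
      ∫ t in Ioi 0, (1 - Real.exp (-(S i j * t))) * t ^ (-1 - a) := by
    ext i j
    rw [smul_apply, map_apply, of_apply, integral_one_sub_exp_neg_mul_mul_rpow ha0.ne' (hS i j),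
      smul_eq_mul, mul_comm]
  have hpointwise : ∀ t,
      v ⬝ᵥ (of fun i j => (1 - Real.exp (-(S i j * t))) * t ^ (-1 - a)) *ᵥ v
        = -(t ^ (-1 - a) * (v ⬝ᵥ (of fun i j => Real.exp (-(S i j * t))) *ᵥ v)) := by
    intro t
    have hones : (of fun _ _ => (1 : ℝ) : Matrix n n ℝ) *ᵥ v = 0 := by
      ext i
      simpa [mulVec, dotProduct] using hv
    have hsplit : (of fun i j => (1 - Real.exp (-(S i j * t))) * t ^ (-1 - a))
        = t ^ (-1 - a) • ((of fun _ _ => (1 : ℝ)) - of fun i j => Real.exp (-(S i j * t))) := by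
      ext i j
      simp only [of_apply, smul_apply, sub_apply, smul_eq_mul]
      ring
    rw [hsplit, smul_mulVec, sub_mulVec, hones, zero_sub, dotProduct_smul, dotProduct_neg,
      smul_eq_mul, mul_neg]
  have hint : C * (v ⬝ᵥ S.map (· ^ a) *ᵥ v) ≤ 0 := by
    rw [← smul_eq_mul, ← dotProduct_smul, ← smul_mulVec, hrepr,
      ← integral_dotProduct_mulVec fun i j =>
        integrableOn_one_sub_exp_neg_mul_mul_rpow ha0 ha1 (hS i j)]
    refine setIntegral_nonpos measurableSet_Ioi fun t ht => ?_
    rw [hpointwise t, neg_nonpos]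
    exact mul_nonneg (Real.rpow_nonneg (le_of_lt ht) _) ((hexp t ht).dotProduct_mulVec_nonneg v)
  exact nonpos_of_mul_nonpos_right hint (integral_one_sub_exp_neg_mul_rpow_pos ha0 ha1)

theorem CondNegDef.posSemidef_basepoint {S : Matrix (Option n) (Option n) ℝ} (hS : S.IsSymm)
    (hcnd : S.CondNegDef) :
    (of fun i j => S (some i) none + S none (some j) - S (some i) (some j)
      - S none none).PosSemidef := by
  refine posSemidef_iff_dotProduct_mulVec.mpr ⟨?_, fun v => ?_⟩
  · ext i j
    simp only [conjTranspose_apply, of_apply, star_trivial, hS.apply]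
    ring
  set w : Option n → ℝ := fun o => o.elim (-∑ i, v i) v
  have hw : ∑ o, w o = 0 := by simp [w, Fintype.sum_option]
  suffices star v ⬝ᵥ (of fun i j => S (some i) none + S none (some j) - S (some i) (some j)
      - S none none) *ᵥ v = -(w ⬝ᵥ S *ᵥ w) by linarith [hcnd w hw]
  simp only [dotProduct, Pi.star_apply, star_trivial, mulVec, hS.apply, of_apply, sub_mul,
    add_mul, sum_sub_distrib, sum_add_distrib, mul_sub, mul_add, mul_sum, Fintype.sum_option,
    Option.elim_none, mul_neg, Option.elim_some, sum_neg_distrib, neg_mul, sum_mul, neg_add_rev,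
    neg_neg, w]
  simp only [← Finset.mul_sum, ← Finset.sum_mul]
  ring

theorem posSemidef_norm_rpow_add_norm_rpow_sub_norm_sub_rpow {F : Type*} [NormedAddCommGroup F]
    [InnerProductSpace ℝ F] {a : ℝ} (ha0 : 0 < a) (ha1 : a < 1) (x : n → F) :
    (of fun i j => ‖x i‖ ^ (2 * a) + ‖x j‖ ^ (2 * a) - ‖x i - x j‖ ^ (2 * a)).PosSemidef := by
  let y : Option n → F := fun o => o.elim 0 x
  let S : Matrix (Option n) (Option n) ℝ := of fun o o' => ‖y o - y o'‖ ^ 2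
  have hcnd : (S.map (· ^ a)).CondNegDef :=
    condNegDef_map_rpow (fun _ _ => by positivity)
      (fun _ ht => posSemidef_exp_neg_norm_sub_sq_mul y ht.le) ha0 ha1
  have hsymm : (S.map (· ^ a)).IsSymm := by
    ext o o'
    simp [S, norm_sub_rev]
  have hpow : ∀ z : F, (‖z‖ ^ 2) ^ a = ‖z‖ ^ (2 * a) := fun z => by
    rw [← Real.rpow_natCast, ← Real.rpow_mul (norm_nonneg _)]
    norm_num
  convert hcnd.posSemidef_basepoint hsymm using 1
  ext i j
  simp only [of_apply, map_apply, S, y, Option.elim_none, Option.elim_some, sub_zero, zero_sub,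
    norm_neg, sub_self, hpow, norm_zero]
  rw [zero_pow two_ne_zero, Real.zero_rpow ha0.ne', sub_zero]

end Matrix

theorem fbm_kernel_positive_definite_general {H : Type*} [NormedAddCommGroup H]
    [InnerProductSpace ℂ H] (a : ℝ) (ha : a ∈ Set.Ioo (0 : ℝ) 1) :
    IsPositiveDefiniteKernelR
      (fun x y : H => ‖x‖ ^ (2 * a) + ‖y‖ ^ (2 * a) - ‖x - y‖ ^ (2 * a)) := by
  let _ : InnerProductSpace ℝ H := InnerProductSpace.rclikeToReal ℂ H
  exact IsPositiveDefiniteKernelR.of_posSemidef fun _ x =>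
    Matrix.posSemidef_norm_rpow_add_norm_rpow_sub_norm_sub_rpow ha.1 ha.2 x

theorem fbm_kernel_positive_definite {H : Type*} [NormedAddCommGroup H]
    [InnerProductSpace ℂ H] [CompleteSpace H] (a : ℝ) (ha : a ∈ Set.Ioo (0 : ℝ) 1) :
    IsPositiveDefiniteKernelR
      (fun x y : H => ‖x‖ ^ (2 * a) + ‖y‖ ^ (2 * a) - ‖x - y‖ ^ (2 * a)) :=
  fbm_kernel_positive_definite_general a ha
end

section
/- Let X be a set and let d : X × X → ℝ be a symmetric kernel with d(x,y) ≥ 0 for all x,y. Then d is negative definite if and only if for every t > 0 the kernel (x,y) ↦ 1/(1 + t·d(x,y)) is positive definite on X. -/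
open Complex Finset

/-- A kernel `k : X → X → ℂ` is positive definite if every finite quadratic form
`∑_{j,i} conj (c i) * k (x i) (x j) * c j` is a nonnegative real number. -/
def IsPositiveDefiniteKernel {X : Type*} (k : X → X → ℂ) : Prop :=
  ∀ (N : ℕ) (x : Fin N → X) (c : Fin N → ℂ),
    (∑ j, ∑ i, (starRingEnd ℂ) (c i) * k (x i) (x j) * c j).im = 0 ∧
    0 ≤ (∑ j, ∑ i, (starRingEnd ℂ) (c i) * k (x i) (x j) * c j).re

/-- A real symmetric kernel `d : X → X → ℝ` is negative definite if every finite quadratic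
form `∑_{j,i} conj (c i) * d (x i) (x j) * c j` with complex coefficients summing to zero is
a real number `≤ 0`. -/
def IsNegativeDefiniteKernelR {X : Type*} (d : X → X → ℝ) : Prop :=
  ∀ (N : ℕ) (x : Fin N → X) (c : Fin N → ℂ), (∑ j, c j) = 0 →
    (∑ j, ∑ i, (starRingEnd ℂ) (c i) * (d (x i) (x j) : ℂ) * c j).im = 0 ∧
    (∑ j, ∑ i, (starRingEnd ℂ) (c i) * (d (x i) (x j) : ℂ) * c j).re ≤ 0


/-!
For negative definite `d` and a base point `x₀`, giving `x₀` the weight `-∑ cᵢ` turns any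
coefficients `c` into zero-sum ones; this shows that `d x x₀ + d x₀ y - d x y - d x₀ x₀` is positive
semidefinite. By Schur's product theorem and a limit its exponential is too, and multiplying by the
rank-one kernel `f x * f y` with `f x = exp (-t d x x₀ + t d x₀ x₀ / 2)` gives `exp (-t d)`. The
resolvent is the Laplace transform `1 / (1 + t d) = ∫₀^∞ e^{-s} e^{-s t d} ds` of these kernels.
Conversely, `d / (1 + t d) = (1 - 1 / (1 + t d)) / t` has a nonpositive quadratic form on zero-sum
coefficients and tends to `d` as `t → 0⁺`.
-/

section

open Filter Topology Matrix
open scoped ComplexOrder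

variable {X : Type*}

def kernelMatrix {α : Type*} (k : X → X → α) {N : ℕ} (x : Fin N → X) :
    Matrix (Fin N) (Fin N) α :=
  Matrix.of fun i j => k (x i) (x j)

lemma sum_sum_conj_mul_eq_star_dotProduct_mulVec (k : X → X → ℂ) {N : ℕ} (x : Fin N → X)
    (c : Fin N → ℂ) :
    ∑ j, ∑ i, starRingEnd ℂ (c i) * k (x i) (x j) * c j = star c ⬝ᵥ (kernelMatrix k x *ᵥ c) := by
  simp only [dotProduct, mulVec, kernelMatrix, of_apply, Finset.mul_sum, mul_assoc]
  exact Finset.sum_comm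

lemma isPositiveDefiniteKernel_iff {k : X → X → ℂ} :
    IsPositiveDefiniteKernel k ↔
      ∀ (N : ℕ) (x : Fin N → X) (c : Fin N → ℂ), 0 ≤ star c ⬝ᵥ (kernelMatrix k x *ᵥ c) := by
  simp only [IsPositiveDefiniteKernel, sum_sum_conj_mul_eq_star_dotProduct_mulVec,
    Complex.nonneg_iff, eq_comm (a := (0 : ℝ)), and_comm]

lemma isNegativeDefiniteKernelR_iff {d : X → X → ℝ} :
    IsNegativeDefiniteKernelR d ↔
      ∀ (N : ℕ) (x : Fin N → X) (c : Fin N → ℂ), ∑ j, c j = 0 →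
        star c ⬝ᵥ (kernelMatrix (fun x y => (d x y : ℂ)) x *ᵥ c) ≤ 0 := by
  simp only [IsNegativeDefiniteKernelR, sum_sum_conj_mul_eq_star_dotProduct_mulVec
    (fun x y => (d x y : ℂ)), Complex.nonpos_iff, and_comm]

def IsPosSemidefKernel (k : X → X → ℝ) : Prop :=
  ∀ (N : ℕ) (x : Fin N → X), (kernelMatrix k x).PosSemidef

namespace IsPosSemidefKernel

open MeasureTheory

variable {k l : X → X → ℝ}

lemma isPositiveDefiniteKernel (hk : IsPosSemidefKernel k) :
    IsPositiveDefiniteKernel (fun x y => (k x y : ℂ)) := by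
  rw [isPositiveDefiniteKernel_iff]
  intro N x
  -- a real Gram matrix `Bᴴ * B` is still a Gram matrix over `ℂ`
  open MatrixOrder in
  obtain ⟨B, hB⟩ := CStarAlgebra.nonneg_iff_eq_star_mul_self.mp (hk N x).nonneg
  have hBℂ : kernelMatrix (fun x y => (k x y : ℂ)) x = (B.map ofRealHom)ᴴ * B.map ofRealHom := by
    rw [← conjTranspose_map _ fun _ => by simp, ← Matrix.map_mul, ← star_eq_conjTranspose, ← hB]
    rfl
  exact hBℂ ▸ (posSemidef_conjTranspose_mul_self _).dotProduct_mulVec_nonneg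

lemma of_isEmpty [IsEmpty X] : IsPosSemidefKernel k := fun N x =>
  have : IsEmpty (Fin N) := Function.isEmpty x
  Subsingleton.elim (kernelMatrix k x) 0 ▸ PosSemidef.zero

lemma add (hk : IsPosSemidefKernel k) (hl : IsPosSemidefKernel l) :
    IsPosSemidefKernel (fun x y => k x y + l x y) := fun N x => (hk N x).add (hl N x)

lemma const_mul (hk : IsPosSemidefKernel k) {a : ℝ} (ha : 0 ≤ a) :
    IsPosSemidefKernel (fun x y => a * k x y) := fun N x => (hk N x).smul ha

lemma mul (hk : IsPosSemidefKernel k) (hl : IsPosSemidefKernel l) :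
    IsPosSemidefKernel (fun x y => k x y * l x y) := fun N x => (hk N x).hadamard (hl N x)

lemma mul_self (f : X → ℝ) : IsPosSemidefKernel (fun x y => f x * f y) := fun _ x =>
  posSemidef_vecMulVec_self_star (f ∘ x)

lemma one : IsPosSemidefKernel (fun _ _ : X => (1 : ℝ)) := by
  simpa using mul_self (X := X) 1

lemma pow (hk : IsPosSemidefKernel k) (n : ℕ) : IsPosSemidefKernel (fun x y => k x y ^ n) := by
  induction n with
  | zero => simpa using one
  | succ n ih => simpa only [pow_succ] using ih.mul hk

lemma of_tendsto {ι : Type*} {L : Filter ι} [L.NeBot] {K : ι → X → X → ℝ}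
    (hK : ∀ n, IsPosSemidefKernel (K n)) (hlim : ∀ x y, Tendsto (fun n => K n x y) L (𝓝 (k x y))) :
    IsPosSemidefKernel k := by
  intro N x
  refine posSemidef_iff_dotProduct_mulVec.mpr ⟨?_, fun c => ?_⟩
  · ext i j
    exact tendsto_nhds_unique ((hlim _ _).congr fun n => (hK n N x).isHermitian.apply i j)
      (hlim _ _)
  · refine ge_of_tendsto' (x := L) (f := fun n => star c ⬝ᵥ (kernelMatrix (K n) x *ᵥ c)) ?_
      fun n => (hK n N x).dotProduct_mulVec_nonneg c
    simp only [dotProduct, mulVec, kernelMatrix, of_apply]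
    exact tendsto_finsetSum _ fun i _ =>
      (tendsto_finsetSum _ fun j _ => (hlim _ _).mul_const _).const_mul _

lemma exp (hk : IsPosSemidefKernel k) : IsPosSemidefKernel (fun x y => Real.exp (k x y)) := by
  refine of_tendsto (L := atTop) (K := fun (n : ℕ) x y => (1 + k x y / n) ^ n) (fun n => ?_)
    fun x y => Real.tendsto_one_add_div_pow_exp (k x y)
  simpa only [div_eq_inv_mul] using (one.add (hk.const_mul (inv_nonneg.2 n.cast_nonneg))).pow n

lemma integral {ι : Type*} [MeasurableSpace ι] {μ : Measure ι} {K : ι → X → X → ℝ}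
    (hK : ∀ᵐ s ∂μ, IsPosSemidefKernel (K s)) (hint : ∀ x y, Integrable (fun s => K s x y) μ) :
    IsPosSemidefKernel (fun x y => ∫ s, K s x y ∂μ) := by
  intro N x
  refine posSemidef_iff_dotProduct_mulVec.mpr ⟨?_, fun c => ?_⟩
  · ext i j
    exact integral_congr_ae (hK.mono fun s hs => (hs N x).isHermitian.apply i j)
  · have hform : star c ⬝ᵥ (kernelMatrix (fun x y => ∫ s, K s x y ∂μ) x *ᵥ c) =
        ∫ s, star c ⬝ᵥ (kernelMatrix (K s) x *ᵥ c) ∂μ := by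
      simp only [dotProduct, mulVec, kernelMatrix, of_apply]
      rw [integral_finsetSum _ fun i _ => (integrable_finsetSum _ fun j _ =>
        (hint _ _).mul_const _).const_mul _]
      simp only [integral_const_mul, integral_finsetSum _ fun j _ => (hint _ _).mul_const _,
        integral_mul_const]
    rw [hform]
    exact integral_nonneg_of_ae (hK.mono fun s hs => (hs N x).dotProduct_mulVec_nonneg c)

end IsPosSemidefKernel

def centeredKernel (d : X → X → ℝ) (x₀ x y : X) : ℝ :=
  d x x₀ + d x₀ y - d x y - d x₀ x₀

lemma dotProduct_snoc_mulVec_snoc (d : X → X → ℝ) {N : ℕ} (x : Fin N → X) (x₀ : X)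
    (c : Fin N → ℝ) :
    Fin.snoc c (-∑ i, c i) ⬝ᵥ (kernelMatrix d (Fin.snoc x x₀) *ᵥ Fin.snoc c (-∑ i, c i)) =
      -(c ⬝ᵥ (kernelMatrix (centeredKernel d x₀) x *ᵥ c)) := by
  simp only [dotProduct, mulVec, kernelMatrix, centeredKernel, of_apply, Fin.sum_univ_castSucc,
    Fin.snoc_castSucc, Fin.snoc_last]
  have row (i : Fin N) : ∑ j, (d (x i) x₀ + d x₀ (x j) - d (x i) (x j) - d x₀ x₀) * c j =
      d (x i) x₀ * ∑ j, c j + ∑ j, d x₀ (x j) * c j - ∑ j, d (x i) (x j) * c j -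
        d x₀ x₀ * ∑ j, c j := by
    simp only [add_mul, sub_mul, Finset.sum_add_distrib, Finset.sum_sub_distrib, Finset.mul_sum]
  simp only [row, mul_add, mul_sub, mul_neg, ← mul_assoc, Finset.sum_add_distrib,
    Finset.sum_sub_distrib, Finset.sum_neg_distrib, ← Finset.sum_mul]
  ring

namespace IsNegativeDefiniteKernelR

open MeasureTheory Set

variable {d : X → X → ℝ}

lemma dotProduct_mulVec_nonpos (hd : IsNegativeDefiniteKernelR d) {N : ℕ} (x : Fin N → X)
    {c : Fin N → ℝ} (hc : ∑ i, c i = 0) : c ⬝ᵥ (kernelMatrix d x *ᵥ c) ≤ 0 := by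
  have := isNegativeDefiniteKernelR_iff.mp hd N x (fun i => c i) (by exact_mod_cast hc)
  simp only [dotProduct, mulVec, kernelMatrix, of_apply, Pi.star_apply, Complex.star_def,
    Complex.conj_ofReal] at this ⊢
  exact_mod_cast this

lemma isPosSemidefKernel_centeredKernel (hd : IsNegativeDefiniteKernelR d)
    (hsymm : ∀ x y, d y x = d x y) (x₀ : X) : IsPosSemidefKernel (centeredKernel d x₀) := by
  intro N x
  refine posSemidef_iff_dotProduct_mulVec.mpr ⟨?_, fun c => ?_⟩
  · ext i j
    simp only [conjTranspose_apply, kernelMatrix, centeredKernel, of_apply, star_trivial]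
    rw [hsymm x₀ (x j), hsymm (x i) x₀, hsymm (x i) (x j)]
    ring
  · rw [star_trivial, ← neg_nonpos, ← dotProduct_snoc_mulVec_snoc]
    exact hd.dotProduct_mulVec_nonpos _ (by simp [Fin.sum_univ_castSucc])

lemma isPosSemidefKernel_exp_neg_mul (hd : IsNegativeDefiniteKernelR d)
    (hsymm : ∀ x y, d y x = d x y) {t : ℝ} (ht : 0 ≤ t) :
    IsPosSemidefKernel (fun x y => Real.exp (-(t * d x y))) := by
  rcases isEmpty_or_nonempty X with hX | ⟨⟨x₀⟩⟩
  · exact IsPosSemidefKernel.of_isEmpty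
  have key := ((hd.isPosSemidefKernel_centeredKernel hsymm x₀).const_mul ht).exp.mul
    (IsPosSemidefKernel.mul_self fun x => Real.exp (-(t * d x x₀) + t * d x₀ x₀ / 2))
  convert key using 3 with x y
  rw [← Real.exp_add, ← Real.exp_add, centeredKernel, hsymm y x₀]
  ring_nf

lemma isPosSemidefKernel_resolvent (hd : IsNegativeDefiniteKernelR d)
    (hsymm : ∀ x y, d y x = d x y) (hnonneg : ∀ x y, 0 ≤ d x y) {t : ℝ} (ht : 0 ≤ t) :
    IsPosSemidefKernel (fun x y => 1 / (1 + t * d x y)) := by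
  have hpos (x y : X) : 0 < 1 + t * d x y := by have := hnonneg x y; positivity
  have laplace (x y : X) :
      ∫ s in Ioi 0, Real.exp (-(1 + t * d x y) * s) = 1 / (1 + t * d x y) := by
    rw [integral_exp_mul_Ioi (neg_lt_zero.2 (hpos x y)), mul_zero, Real.exp_zero, neg_div_neg_eq]
  simp only [← laplace]
  refine IsPosSemidefKernel.integral (ae_restrict_of_forall_mem measurableSet_Ioi fun s hs => ?_)
    fun x y => exp_neg_integrableOn_Ioi 0 (hpos x y)
  convert (hd.isPosSemidefKernel_exp_neg_mul hsymm (mul_nonneg (le_of_lt hs) ht)).const_mul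
    (Real.exp_nonneg (-s)) using 3 with x y
  rw [← Real.exp_add]
  ring_nf

end IsNegativeDefiniteKernelR

lemma star_dotProduct_mulVec_div_one_add_mul {d : X → X → ℝ} {t : ℝ} (ht : t ≠ 0)
    (hd : ∀ x y, 1 + t * d x y ≠ 0) {N : ℕ} (x : Fin N → X) {c : Fin N → ℂ}
    (hc : ∑ j, c j = 0) :
    star c ⬝ᵥ (kernelMatrix (fun x y => ((d x y / (1 + t * d x y) : ℝ) : ℂ)) x *ᵥ c) =
      -((t⁻¹ : ℝ) *
        star c ⬝ᵥ (kernelMatrix (fun x y => ((1 / (1 + t * d x y) : ℝ) : ℂ)) x *ᵥ c)) := by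
  have hentry (y z : X) : d y z / (1 + t * d y z) = t⁻¹ * (1 - 1 / (1 + t * d y z)) := by
    rw [one_sub_div (hd y z), add_sub_cancel_left, mul_div_assoc', inv_mul_cancel_left₀ ht]
  have hone : kernelMatrix (fun _ _ => (1 : ℂ)) x *ᵥ c = 0 := by
    ext i
    simp [kernelMatrix, mulVec, dotProduct, hc]
  have hmat : kernelMatrix (fun x y => ((d x y / (1 + t * d x y) : ℝ) : ℂ)) x =
      ((t⁻¹ : ℝ) : ℂ) • (kernelMatrix (fun _ _ => (1 : ℂ)) x -
        kernelMatrix (fun x y => ((1 / (1 + t * d x y) : ℝ) : ℂ)) x) := by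
    ext i j
    simp [kernelMatrix, hentry]
  rw [hmat, smul_mulVec, sub_mulVec, hone, zero_sub, dotProduct_smul, dotProduct_neg,
    smul_eq_mul, mul_neg]

lemma tendsto_star_dotProduct_mulVec_div_one_add_mul (d : X → X → ℝ) {N : ℕ} (x : Fin N → X)
    (c : Fin N → ℂ) :
    Tendsto (fun t : ℝ =>
        star c ⬝ᵥ (kernelMatrix (fun x y => ((d x y / (1 + t * d x y) : ℝ) : ℂ)) x *ᵥ c))
      (𝓝 0) (𝓝 (star c ⬝ᵥ (kernelMatrix (fun x y => (d x y : ℂ)) x *ᵥ c))) := by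
  simp only [dotProduct, mulVec, kernelMatrix, of_apply]
  refine tendsto_finsetSum _ fun i _ => (tendsto_finsetSum _ fun j _ => ?_).const_mul _
  refine ((Complex.continuous_ofReal.tendsto _).comp ?_).mul_const _
  have hden : Tendsto (fun t : ℝ => 1 + t * d (x i) (x j)) (𝓝 0) (𝓝 1) :=
    (continuous_const.add (continuous_id.mul continuous_const)).tendsto' 0 1 (by simp)
  simpa [div_eq_mul_inv] using (hden.inv₀ one_ne_zero).const_mul (d (x i) (x j))

lemma isNegativeDefiniteKernelR_of_resolvent {d : X → X → ℝ} (hnonneg : ∀ x y, 0 ≤ d x y)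
    (H : ∀ t : ℝ, 0 < t →
      IsPositiveDefiniteKernel (fun x y => ((1 / (1 + t * d x y) : ℝ) : ℂ))) :
    IsNegativeDefiniteKernelR d := by
  rw [isNegativeDefiniteKernelR_iff]
  intro N x c hc
  refine le_of_tendsto
    ((tendsto_star_dotProduct_mulVec_div_one_add_mul d x c).mono_left nhdsWithin_le_nhds)
    (eventually_nhdsWithin_of_forall (s := Set.Ioi 0) fun t (ht : 0 < t) => ?_)
  have hden (y z : X) : 1 + t * d y z ≠ 0 := by have := hnonneg y z; positivity
  rw [star_dotProduct_mulVec_div_one_add_mul ht.ne' hden x hc, neg_nonpos]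
  exact mul_nonneg (by exact_mod_cast inv_nonneg.2 ht.le)
    (isPositiveDefiniteKernel_iff.mp (H t ht) N x c)

end

theorem schoenberg_resolvent {X : Type*} (d : X → X → ℝ)
    (hsymm : ∀ x y : X, d y x = d x y) (hnonneg : ∀ x y : X, 0 ≤ d x y) :
    IsNegativeDefiniteKernelR d ↔
      ∀ t : ℝ, 0 < t →
        IsPositiveDefiniteKernel
          (fun x y : X => ((1 / (1 + t * d x y) : ℝ) : ℂ)) :=
  ⟨fun hd _ ht => (hd.isPosSemidefKernel_resolvent hsymm hnonneg ht.le).isPositiveDefiniteKernel,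
    isNegativeDefiniteKernelR_of_resolvent hnonneg⟩
end

section
/- Let Δ be the real symmetric 5×5 matrix with rows (0,1,1,1,2), (1,0,2,2,1), (1,2,0,2,1), (1,2,2,0,1), (2,1,1,1,0). Then Δ is not negative definite: there exists c : Fin 5 → ℝ with ∑_{j} c_j = 0 and ∑_{j,k} c_k · Δ_{k j} · c_j > 0. -/
open Finset

theorem delta_not_negative_definite :
    let Δ : Matrix (Fin 5) (Fin 5) ℝ :=
      !![0, 1, 1, 1, 2;
         1, 0, 2, 2, 1;
         1, 2, 0, 2, 1;
         1, 2, 2, 0, 1;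
         2, 1, 1, 1, 0]
    ∃ c : Fin 5 → ℝ, (∑ j, c j) = 0 ∧ 0 < ∑ j, ∑ k, c k * Δ k j * c j := by
  intro Δ
  -- Δ is the path metric of K₂,₃ with parts {0, 4} and {1, 2, 3}; weight them 3 and -2.
  refine ⟨![3, -2, -2, -2, 3], ?_, ?_⟩ <;> simp [Δ, Fin.sum_univ_five] <;> norm_num
end

section
/- Let Δ be the real symmetric 5×5 matrix with rows (0,1,1,1,2), (1,0,2,2,1), (1,2,0,2,1), (1,2,2,0,1), (2,1,1,1,0). Then there exists t > 0 such that the 5×5 matrix with entries exp(−t·Δ_{jk}) is not positive semidefinite; i.e., there exist t > 0 and c : Fin 5 → ℂ with (∑_{j,k} conj(c_k) · exp(−t·Δ_{k j}) · c_j).re < 0. -/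
open Finset Complex

theorem re_sum_conj_mul_exp_neg_mul {ι : Type*} [Fintype ι] (Δ : Matrix ι ι ℝ) (t : ℝ)
    (c : ι → ℝ) :
    (∑ j, ∑ k, (starRingEnd ℂ) (c k : ℂ) * Complex.exp (-(t : ℂ) * (Δ k j : ℂ)) * c j).re =
      ∑ j, ∑ k, c k * Real.exp (-t) ^ Δ k j * c j := by
  simp_rw [← Real.exp_mul, conj_ofReal, ← ofReal_neg, ← ofReal_mul, ← ofReal_exp, ← ofReal_mul]
  norm_cast

theorem exp_delta_not_positive_semidefinite :
    let Δ : Matrix (Fin 5) (Fin 5) ℝ :=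
      !![0, 1, 1, 1, 2;
         1, 0, 2, 2, 1;
         1, 2, 0, 2, 1;
         1, 2, 2, 0, 1;
         2, 1, 1, 1, 0]
    ∃ t : ℝ, 0 < t ∧ ∃ c : Fin 5 → ℂ,
      (∑ j, ∑ k, (starRingEnd ℂ) (c k) * Complex.exp (-(t : ℂ) * (Δ k j : ℂ)) * c j).re
        < 0 := by
  intro Δ
  let c : Fin 5 → ℝ := ![1, -7/10, -7/10, -7/10, 1]
  have hq : Real.exp (-Real.log (5/4)) = 4/5 := by
    rw [Real.exp_neg, Real.exp_log (by norm_num)]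
    norm_num
  have hform : ∑ j, ∑ k, c k * (4/5 : ℝ) ^ Δ k j * c j = -221/2500 := by
    simp [Fin.sum_univ_five, Δ, c]
    norm_num
  refine ⟨Real.log (5/4), Real.log_pos (by norm_num), fun i => c i, ?_⟩
  rw [re_sum_conj_mul_exp_neg_mul, hq, hform]
  norm_num
end

section
/- Let X be the space of bounded functions from ℝ to ℂ equipped with the supremum norm ‖x‖ = sup_{s∈ℝ} |x(s)| (e.g., X = lp (fun _ : ℝ => ℂ) ∞ in Mathlib), and let d(x,y) = ‖x − y‖. Then the kernel (x,y) ↦ exp(−d(x,y)) is not positive definite on X: there exist N ∈ ℕ, x₁,…,x_N ∈ X and c₁,…,c_N ∈ ℂ with (∑_{j,k=1}^N conj(c_k) · exp(−‖x_k − x_j‖) · c_j).re < 0. (Witnesses can be taken to be five explicit bounded step functions.) -/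
/-!
Every finite metric space embeds isometrically into `ℓ^∞` by the Fréchet embedding `a ↦ d(a, ·)`,
and `ℓ^∞(ℝ)` has room for all these coordinates. So it suffices to exhibit a five-point metric
space on which `exp (-d)` fails to be positive definite. The graph metric of `K₂,₃` with an extra
edge in its part of size three, scaled by `log (7/6)`, does it: then `exp (-d) = (6/7) ^ D`, and the
real weights `(468, 468, -798, -798, 679)` give the quadratic form the value `-6305/7`.
-/

open Finset Complex ENNReal

theorem exists_lp_infty_norm_sub_eq {α ι 𝕜 : Type*} [RCLike 𝕜] [Finite α] {σ : ι → α}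
    (hσ : Function.Surjective σ)
    (D : α → α → ℝ) (hself : ∀ a, D a a = 0) (hcomm : ∀ a b, D a b = D b a)
    (htri : ∀ a b c, D a c ≤ D a b + D b c) :
    ∃ x : α → lp (fun _ : ι => 𝕜) ∞, ∀ a b, ‖x a - x b‖ = D a b := by
  have hmem (a : α) : Memℓp (fun i => (D a (σ i) : 𝕜)) ∞ :=
    memℓp_infty_iff.2 <| (Set.finite_range fun c => ‖(D a c : 𝕜)‖).bddAbove.mono
      (Set.range_comp_subset_range σ fun c => ‖(D a c : 𝕜)‖)
  refine ⟨fun a => ⟨_, hmem a⟩, fun a b => ?_⟩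
  have hcoord (i : ι) : ‖(⟨_, hmem a⟩ - ⟨_, hmem b⟩ : lp (fun _ : ι => 𝕜) ∞) i‖
      = |D a (σ i) - D b (σ i)| := by
    rw [lp.coeFn_sub, Pi.sub_apply, ← RCLike.ofReal_sub, RCLike.norm_ofReal]
  have hnonneg : 0 ≤ D a b := by linarith [htri a b a, hself a, hcomm a b]
  apply le_antisymm
  · refine lp.norm_le_of_forall_le hnonneg fun i => ?_
    rw [hcoord, abs_sub_le_iff]
    constructor <;> linarith [htri a b (σ i), htri b a (σ i), hcomm a b]
  · obtain ⟨i, hi⟩ := hσ a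
    calc D a b = |D a (σ i) - D b (σ i)| := by
          rw [hi, hself, hcomm b a, zero_sub, abs_neg, abs_of_nonneg hnonneg]
      _ ≤ _ := hcoord i ▸ lp.norm_apply_le_norm ENNReal.top_ne_zero _ i

theorem re_sum_conj_ofReal_mul_exp_neg_ofReal_mul {n : ℕ} (c : Fin n → ℝ)
    (d : Fin n → Fin n → ℝ) :
    (∑ j, ∑ k, (starRingEnd ℂ) (c k : ℂ) * Complex.exp (-(d k j : ℂ)) * c j).re
      = ∑ j, ∑ k, c k * Real.exp (-d k j) * c j := by
  simp only [Complex.conj_ofReal, ← Complex.ofReal_neg, ← Complex.ofReal_exp,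
    ← Complex.ofReal_mul, ← Complex.ofReal_sum, Complex.ofReal_re]

theorem surjective_fin_ofNat_natFloor (n : ℕ) [NeZero n] :
    Function.Surjective fun s : ℝ => Fin.ofNat n ⌊s⌋₊ :=
  fun k : Fin n => ⟨(k : ℕ), by simp⟩

def graphDist : Fin 5 → Fin 5 → ℕ :=
  ![![0, 1, 1, 1, 2], ![1, 0, 1, 1, 2], ![1, 1, 0, 2, 1], ![1, 1, 2, 0, 1], ![2, 2, 1, 1, 0]]

theorem graphDist_self : ∀ i, graphDist i i = 0 := by decide

theorem graphDist_comm : ∀ i j, graphDist i j = graphDist j i := by decide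

theorem graphDist_triangle : ∀ i j k, graphDist i k ≤ graphDist i j + graphDist j k := by
  decide

noncomputable def weight : Fin 5 → ℝ := ![468, 468, -798, -798, 679]

theorem sum_weight_mul_pow_graphDist_neg :
    ∑ j, ∑ k, weight k * (6 / 7 : ℝ) ^ graphDist k j * weight j < 0 := by
  simp only [weight, graphDist, Fin.sum_univ_five, Matrix.cons_val', Matrix.cons_val_fin_one,
    Matrix.cons_val_zero, Matrix.cons_val_one, Matrix.cons_val]
  norm_num

theorem exp_neg_log_mul_natCast (r : ℝ) (hr : 0 < r) (m : ℕ) :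
    Real.exp (-(Real.log r * m)) = r⁻¹ ^ m := by
  rw [← Real.exp_log (inv_pos.2 hr), ← Real.exp_nat_mul, Real.log_inv]
  ring_nf

theorem exp_neg_sup_dist_not_positive_definite :
    ∃ (N : ℕ) (x : Fin N → lp (fun _ : ℝ => ℂ) ∞) (c : Fin N → ℂ),
      (∑ j, ∑ k,
        (starRingEnd ℂ) (c k) * Complex.exp (-(‖x k - x j‖ : ℂ)) * c j).re < 0 := by
  have hlog : 0 ≤ Real.log (7 / 6) := Real.log_nonneg (by norm_num)
  obtain ⟨x, hx⟩ := exists_lp_infty_norm_sub_eq (𝕜 := ℂ) (surjective_fin_ofNat_natFloor 5)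
    (fun i j => Real.log (7 / 6) * graphDist i j)
    (by simp [graphDist_self]) (fun i j => by rw [graphDist_comm])
    (fun i j k => by
      rw [← mul_add]
      exact mul_le_mul_of_nonneg_left (by exact_mod_cast graphDist_triangle i j k) hlog)
  refine ⟨5, x, fun i => (weight i : ℂ), ?_⟩
  rw [re_sum_conj_ofReal_mul_exp_neg_ofReal_mul weight fun k j => ‖x k - x j‖]
  simp only [hx, exp_neg_log_mul_natCast _ (by norm_num : (0 : ℝ) < 7 / 6), inv_div]
  exact sum_weight_mul_pow_graphDist_neg
end

section
/- The kernel (x,y) ↦ 1/(‖x‖ + ‖y‖) is positive definite on ℂⁿ \ {0}, where ‖·‖ is the Euclidean norm. -/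
/-! Writing `1 / (a + b) = ∫₀^∞ e^{-a t} e^{-b t} dt` exhibits the kernel as a Gram kernel in
`L²(0, ∞)`, so the quadratic form equals `∫₀^∞ |∑ᵢ cᵢ e^{-‖xᵢ‖ t}|² dt ≥ 0`. -/

open Finset Complex MeasureTheory
open scoped ComplexConjugate ComplexOrder

theorem zero_le_sum_sum_conj_mul_integral_mul_mul {ι α : Type*} [Fintype ι] [MeasurableSpace α]
    {μ : Measure α} (f : ι → α → ℝ) (hf : ∀ i j, Integrable (fun t => f i t * f j t) μ)
    (c : ι → ℂ) :
    0 ≤ ∑ j, ∑ i, conj (c i) * ((∫ t, f i t * f j t ∂μ : ℝ) : ℂ) * c j := by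
  have hpoint : ∀ t, ∑ j, ∑ i, conj (c i) * ((f i t * f j t : ℝ) : ℂ) * c j
      = ((‖∑ i, c i * (f i t : ℂ)‖ ^ 2 : ℝ) : ℂ) := fun t => by
    rw [ofReal_pow, ← conj_mul', map_sum, sum_mul_sum, sum_comm]
    simp only [map_mul, conj_ofReal, ofReal_mul]
    exact sum_congr rfl fun j _ => sum_congr rfl fun i _ => by ring
  have hint : ∀ i j, Integrable (fun t => conj (c i) * ((f i t * f j t : ℝ) : ℂ) * c j) μ :=
    fun i j => ((hf i j).ofReal.const_mul _).mul_const _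
  calc (0 : ℂ) ≤ ((∫ t, ‖∑ i, c i * (f i t : ℂ)‖ ^ 2 ∂μ : ℝ) : ℂ) :=
        zero_le_real.mpr (integral_nonneg fun t => sq_nonneg _)
    _ = ∫ t, ∑ j, ∑ i, conj (c i) * ((f i t * f j t : ℝ) : ℂ) * c j ∂μ := by
        simp only [hpoint, integral_complex_ofReal]
    _ = ∑ j, ∑ i, conj (c i) * ((∫ t, f i t * f j t ∂μ : ℝ) : ℂ) * c j := by
        rw [integral_finsetSum _ fun j _ => integrable_finsetSum _ fun i _ => hint i j]
        refine sum_congr rfl fun j _ => ?_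
        rw [integral_finsetSum _ fun i _ => hint i j]
        refine sum_congr rfl fun i _ => ?_
        rw [integral_mul_const, integral_const_mul, integral_complex_ofReal]

theorem exp_neg_mul_mul_exp_neg_mul (a b t : ℝ) :
    Real.exp (-a * t) * Real.exp (-b * t) = Real.exp (-(a + b) * t) := by
  rw [← Real.exp_add]
  ring_nf

theorem integrableOn_exp_neg_mul_mul_exp_neg_mul_Ioi {a b : ℝ} (hab : 0 < a + b) :
    IntegrableOn (fun t => Real.exp (-a * t) * Real.exp (-b * t)) (Set.Ioi 0) := by
  simp_rw [exp_neg_mul_mul_exp_neg_mul]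
  exact integrableOn_exp_mul_Ioi (neg_neg_iff_pos.mpr hab) 0

theorem integral_exp_neg_mul_mul_exp_neg_mul_Ioi {a b : ℝ} (hab : 0 < a + b) :
    ∫ t in Set.Ioi 0, Real.exp (-a * t) * Real.exp (-b * t) = 1 / (a + b) := by
  simp_rw [exp_neg_mul_mul_exp_neg_mul]
  rw [integral_exp_mul_Ioi (neg_neg_iff_pos.mpr hab), mul_zero, Real.exp_zero, neg_div_neg_eq]

theorem zero_le_sum_sum_conj_mul_one_div_add_mul {ι : Type*} [Fintype ι] (a : ι → ℝ)
    (ha : ∀ i, 0 < a i) (c : ι → ℂ) :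
    0 ≤ ∑ j, ∑ i, conj (c i) * ((1 / (a i + a j) : ℝ) : ℂ) * c j := by
  simp_rw [← integral_exp_neg_mul_mul_exp_neg_mul_Ioi (add_pos (ha _) (ha _))]
  exact zero_le_sum_sum_conj_mul_integral_mul_mul _
    (fun i j => integrableOn_exp_neg_mul_mul_exp_neg_mul_Ioi (add_pos (ha i) (ha j))) c

theorem inv_sum_norms_positive_definite_on_nonzero (n : ℕ) :
    ∀ (N : ℕ) (x : Fin N → EuclideanSpace ℂ (Fin n)), (∀ i, x i ≠ 0) →
      ∀ c : Fin N → ℂ,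
        (∑ j, ∑ i, (starRingEnd ℂ) (c i) *
          ((1 / (‖x i‖ + ‖x j‖) : ℝ) : ℂ) * c j).im = 0 ∧
        0 ≤ (∑ j, ∑ i, (starRingEnd ℂ) (c i) *
          ((1 / (‖x i‖ + ‖x j‖) : ℝ) : ℂ) * c j).re := by
  intro N x hx c
  obtain ⟨hre, him⟩ := Complex.nonneg_iff.mp
    (zero_le_sum_sum_conj_mul_one_div_add_mul _ (fun i => norm_pos_iff.mpr (hx i)) c)
  exact ⟨him.symm, hre⟩
end
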